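/- Define the sequence Γ_n(x,y,z,x̄,ȳ,z̄) recursively as in the generalized Dumont-Foata recurrence, and define µ_n by µ_0 = 1 and as the generating function of Motzkin paths: µ_n = Σ over Motzkin paths of length n of the product of weights, where a level step at height i has weight b_i = (x+i)(ȳ+i)+(y+i)(z̄+i)+(z+i)(x̄+i) − i(i+1) and an up step from height i−1 to height i has weight λ_i = i(x̄+y+i−1)(ȳ+z+i−1)(z̄+x+i−1) (down steps have weight 1). Then Γ_{n+1} = µ_n for all n ≥ 0. -/

import Mathlib

/-- Auxiliary: `GammaAux n = Γ_{n+1}` for the generalized Dumont-Foata polynomials. -/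
def GammaAux {R : Type*} [CommRing R] : ℕ → R → R → R → R → R → R → R
  | 0, _, _, _, _, _, _ => 1
  | n + 1, x, y, z, xb, yb, zb =>
      (x + zb) * (y + xb) * GammaAux n (x + 1) y z (xb + 1) yb zb
        + (x * (yb - y) + xb * (z - zb) - x * xb) * GammaAux n x y z xb yb zb

/-- The generalized Dumont-Foata polynomial `Γ_n` (defined for `n ≥ 1`, with `Γ_1 = 1`). -/
def Gamma {R : Type*} [CommRing R] (n : ℕ) : R → R → R → R → R → R → R :=
  GammaAux (n - 1)

/-- Steps of a Motzkin path. -/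
inductive MStep
  | up
  | down
  | level
deriving DecidableEq

instance : Fintype MStep :=
  ⟨{MStep.up, MStep.down, MStep.level}, fun x => by cases x <;> simp⟩

/-- `isMotzkinFrom h s` : the path `s`, started at height `h`, stays weakly above
the x-axis and ends at height `0`. -/
def isMotzkinFrom : ℕ → List MStep → Bool
  | h, [] => h = 0
  | h, .up :: rest => isMotzkinFrom (h + 1) rest
  | h, .down :: rest => h ≠ 0 && isMotzkinFrom (h - 1) rest
  | h, .level :: rest => isMotzkinFrom h rest

/-- Weight of a path started at height `h`: a level step at height `i` weighs `b i`,
an up step from height `i - 1` to `i` weighs `lam i`, a down step weighs `1`. -/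
def pathWeight {R : Type*} [CommRing R] (b lam : ℕ → R) : ℕ → List MStep → R
  | _, [] => 1
  | h, .up :: rest => lam (h + 1) * pathWeight b lam (h + 1) rest
  | h, .down :: rest => pathWeight b lam (h - 1) rest
  | h, .level :: rest => b h * pathWeight b lam h rest

/-- The generating function of Motzkin paths of length `n` with weights `b`, `lam`. -/
def motzkinSum {R : Type*} [CommRing R] (b lam : ℕ → R) (n : ℕ) : R :=
  ∑ f : Fin n → MStep,
    if isMotzkinFrom 0 (List.ofFn f) then pathWeight b lam 0 (List.ofFn f) else 0


/-! Both sides are the `(0, 0)` entry of `Mⁿ` for the tridiagonal matrix `M` with diagonal `b`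
and `M h (h + 1) * M (h + 1) h = λ (h + 1)`. For `µₙ` this is the transfer-matrix expansion over
the first step of a path, which computes the columns `Mⁿ e₀`. For `Γ` one uses the rows `e₀ᵀ Mⁿ`
instead: `M L = L M'` for the lower bidiagonal `L` with diagonal `(x + z̄ + h) (y + x̄ + h)` and
`M'` the matrix with `x, x̄` shifted by one, so `e₀ᵀ Mⁿ L = (x + z̄) (y + x̄) e₀ᵀ M'ⁿ`. Its `0`-th
entry, together with `(Mⁿ⁺¹)₀₀ = b₀ (Mⁿ)₀₀ + (Mⁿ)₀₁`, is the recurrence defining `Γ`. Rows and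
columns give the same `(0, 0)` entry by summation by parts. -/

section Jacobi

variable {R : Type*} [CommRing R]

/-- Row vectors times the tridiagonal matrix `M` with `M h h = b h`, `M h (h + 1) = lam (h + 1)`
and `M (h + 1) h = 1`. -/
def jacobiVecMul (b lam : ℕ → R) : Module.End R (ℕ → R) where
  toFun w
    | 0 => b 0 * w 0 + w 1
    | h + 1 => lam (h + 1) * w h + b (h + 1) * w (h + 1) + w (h + 2)
  map_add' v w := by ext (_ | h) <;> simp only [Pi.add_apply] <;> ring
  map_smul' a w := by
    ext (_ | h) <;> simp only [Pi.smul_apply, smul_eq_mul, RingHom.id_apply] <;> ring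

/-- The same matrix `M` times column vectors. -/
def jacobiMulVec (b lam : ℕ → R) : Module.End R (ℕ → R) where
  toFun v
    | 0 => lam 1 * v 1 + b 0 * v 0
    | h + 1 => lam (h + 2) * v (h + 2) + b (h + 1) * v (h + 1) + v h
  map_add' v w := by ext (_ | h) <;> simp only [Pi.add_apply] <;> ring
  map_smul' a w := by
    ext (_ | h) <;> simp only [Pi.smul_apply, smul_eq_mul, RingHom.id_apply] <;> ring

variable (b lam : ℕ → R)

@[simp] lemma jacobiVecMul_apply_zero (w : ℕ → R) :
    jacobiVecMul b lam w 0 = b 0 * w 0 + w 1 := rfl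

@[simp] lemma jacobiVecMul_apply_succ (w : ℕ → R) (h : ℕ) :
    jacobiVecMul b lam w (h + 1) = lam (h + 1) * w h + b (h + 1) * w (h + 1) + w (h + 2) := rfl

@[simp] lemma jacobiMulVec_apply_zero (v : ℕ → R) :
    jacobiMulVec b lam v 0 = lam 1 * v 1 + b 0 * v 0 := rfl

@[simp] lemma jacobiMulVec_apply_succ (v : ℕ → R) (h : ℕ) :
    jacobiMulVec b lam v (h + 1) = lam (h + 2) * v (h + 2) + b (h + 1) * v (h + 1) + v h := rfl

/-- Summation by parts: the transpose identity `⟪w M, v⟫ = ⟪w, M v⟫` on `{0, …, N}`, up to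
the two boundary terms. -/
lemma sum_range_jacobiVecMul_mul (w v : ℕ → R) (N : ℕ) :
    ∑ h ∈ Finset.range (N + 1), jacobiVecMul b lam w h * v h + lam (N + 1) * w N * v (N + 1) =
      ∑ h ∈ Finset.range (N + 1), w h * jacobiMulVec b lam v h + w (N + 1) * v N := by
  induction N with
  | zero =>
    simp only [zero_add, Finset.range_one, Finset.sum_singleton, jacobiVecMul_apply_zero,
      jacobiMulVec_apply_zero]
    ring
  | succ N ih =>
    rw [Finset.sum_range_succ, Finset.sum_range_succ _ (N + 1)]
    simp only [jacobiVecMul_apply_succ, jacobiMulVec_apply_succ]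
    linear_combination ih

lemma jacobiMulVec_eq_zero_of_lt {p : ℕ} {v : ℕ → R} (hv : ∀ h, p < h → v h = 0) :
    ∀ h, p + 1 < h → jacobiMulVec b lam v h = 0 := by
  rintro (_ | h) hh
  · omega
  · simp [hv h (by omega), hv (h + 1) (by omega), hv (h + 2) (by omega)]

lemma jacobiVecMul_eq_zero_of_lt {p : ℕ} {w : ℕ → R} (hw : ∀ h, p < h → w h = 0) :
    ∀ h, p + 1 < h → jacobiVecMul b lam w h = 0 := by
  rintro (_ | h) hh
  · omega
  · simp [hw h (by omega), hw (h + 1) (by omega), hw (h + 2) (by omega)]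

lemma jacobiMulVec_pow_eq_zero_of_lt {p : ℕ} {v : ℕ → R} (hv : ∀ h, p < h → v h = 0)
    (j : ℕ) :
    ∀ h, p + j < h → (jacobiMulVec b lam ^ j) v h = 0 := by
  induction j with
  | zero => simpa using hv
  | succ j ih =>
    rw [pow_succ', Module.End.mul_apply]
    exact jacobiMulVec_eq_zero_of_lt b lam ih

lemma sum_range_jacobiVecMul_pow_mul {p q : ℕ} {w v : ℕ → R} (hw : ∀ h, p < h → w h = 0)
    (hv : ∀ h, q < h → v h = 0) {N j : ℕ} (hp : p + j ≤ N) (hq : q + j ≤ N) :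
    ∑ h ∈ Finset.range (N + 1), (jacobiVecMul b lam ^ j) w h * v h =
      ∑ h ∈ Finset.range (N + 1), w h * (jacobiMulVec b lam ^ j) v h := by
  induction j generalizing p w with
  | zero => simp
  | succ j ih =>
    rw [pow_succ, Module.End.mul_apply, ih (jacobiVecMul_eq_zero_of_lt b lam hw) (by omega)
      (by omega), pow_succ', Module.End.mul_apply]
    have := sum_range_jacobiVecMul_mul b lam w ((jacobiMulVec b lam ^ j) v) N
    rwa [hw (N + 1) (by omega), jacobiMulVec_pow_eq_zero_of_lt b lam hv j (N + 1) (by omega),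
      mul_zero, zero_mul, add_zero, add_zero] at this

lemma jacobiVecMul_pow_single_zero (n : ℕ) :
    (jacobiVecMul b lam ^ n) (Pi.single 0 1) 0 = (jacobiMulVec b lam ^ n) (Pi.single 0 1) 0 := by
  have single_vanishes : ∀ h, 0 < h → (Pi.single 0 1 : ℕ → R) h = 0 := fun h hh =>
    Pi.single_eq_of_ne (by omega) 1
  have := sum_range_jacobiVecMul_pow_mul b lam single_vanishes single_vanishes
    (N := n) (j := n) (by omega) (by omega)
  simpa [Pi.single_apply, Finset.sum_ite_eq'] using this

end Jacobi

lemma sum_pi_fin_succ {α M : Type*} [Fintype α] [DecidableEq α] [AddCommMonoid M] (n : ℕ)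
    (F : (Fin (n + 1) → α) → M) :
    ∑ f, F f = ∑ a : α, ∑ g : Fin n → α, F (Fin.cons a g) := by
  rw [← Fintype.sum_prod_type']
  exact (Fintype.sum_equiv (Fin.consEquiv fun _ => α) _ _ fun _ => rfl).symm

lemma MStep.sum_univ {M : Type*} [AddCommMonoid M] (F : MStep → M) :
    ∑ a, F a = F .up + F .down + F .level := by
  simp [Finset.univ, Fintype.elems, add_assoc]

section MotzkinPaths

variable {R : Type*} [CommRing R] (b lam : ℕ → R)

/-- The weight of `l` as a Motzkin path from height `h` down to `0`, or `0` if it is not one. -/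
def motzkinWeight (h : ℕ) (l : List MStep) : R :=
  if isMotzkinFrom h l then pathWeight b lam h l else 0

@[simp] lemma motzkinWeight_nil (h : ℕ) :
    motzkinWeight b lam h [] = (Pi.single 0 1 : ℕ → R) h := by
  rcases h with _ | h <;> simp [motzkinWeight, isMotzkinFrom, pathWeight]

@[simp] lemma motzkinWeight_up (h : ℕ) (l : List MStep) :
    motzkinWeight b lam h (.up :: l) = lam (h + 1) * motzkinWeight b lam (h + 1) l := by
  by_cases hl : isMotzkinFrom (h + 1) l <;> simp [motzkinWeight, isMotzkinFrom, pathWeight, hl]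

@[simp] lemma motzkinWeight_level (h : ℕ) (l : List MStep) :
    motzkinWeight b lam h (.level :: l) = b h * motzkinWeight b lam h l := by
  by_cases hl : isMotzkinFrom h l <;> simp [motzkinWeight, isMotzkinFrom, pathWeight, hl]

@[simp] lemma motzkinWeight_down_zero (l : List MStep) :
    motzkinWeight b lam 0 (.down :: l) = 0 := by
  simp [motzkinWeight, isMotzkinFrom]

@[simp] lemma motzkinWeight_down_succ (h : ℕ) (l : List MStep) :
    motzkinWeight b lam (h + 1) (.down :: l) = motzkinWeight b lam h l := by
  simp [motzkinWeight, isMotzkinFrom, pathWeight]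

/-- Splitting off the first step is the transfer-matrix recursion `μₙ₊₁ = M μₙ`. -/
lemma sum_motzkinWeight (n h : ℕ) :
    ∑ f : Fin n → MStep, motzkinWeight b lam h (List.ofFn f) =
      (jacobiMulVec b lam ^ n) (Pi.single 0 1) h := by
  induction n generalizing h with
  | zero => simp
  | succ n ih =>
    simp only [sum_pi_fin_succ, MStep.sum_univ, List.ofFn_cons, motzkinWeight_up,
      motzkinWeight_level, ← Finset.mul_sum, ih, pow_succ', Module.End.mul_apply]
    rcases h with _ | h <;> simp only [motzkinWeight_down_zero, motzkinWeight_down_succ,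
      Finset.sum_const_zero, ih, jacobiMulVec_apply_zero, jacobiMulVec_apply_succ] <;> ring

lemma motzkinSum_eq_jacobiMulVec_pow (n : ℕ) :
    motzkinSum b lam n = (jacobiMulVec b lam ^ n) (Pi.single 0 1) 0 :=
  sum_motzkinWeight b lam n 0

end MotzkinPaths

section Darboux

variable {R : Type*} [CommRing R]

/-- Row vectors times the lower bidiagonal matrix with diagonal `c` and `1` below it. -/
def bidiagVecMul (c : ℕ → R) : Module.End R (ℕ → R) where
  toFun w h := c h * w h + w (h + 1)
  map_add' v w := by ext h; simp only [Pi.add_apply]; ring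
  map_smul' a w := by ext h; simp only [Pi.smul_apply, smul_eq_mul, RingHom.id_apply]; ring

@[simp] lemma bidiagVecMul_apply (c w : ℕ → R) (h : ℕ) :
    bidiagVecMul c w h = c h * w h + w (h + 1) := rfl

/-- `M L = L M'` for the Jacobi matrices `M`, `M'` of `(b, lam)`, `(b', lam')`, compared band by
band. -/
lemma bidiagVecMul_semiconjBy {b lam b' lam' c : ℕ → R} (hlam'0 : lam' 0 = 0)
    (hlam : ∀ h, c (h + 1) * lam (h + 1) = lam' (h + 1) * c h)
    (hdiag : ∀ h, c h * b h + lam (h + 1) = b' h * c h + lam' h)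
    (hsup : ∀ h, c h + b (h + 1) = b' h + c (h + 1)) :
    SemiconjBy (bidiagVecMul c) (jacobiVecMul b lam) (jacobiVecMul b' lam') := by
  refine LinearMap.ext fun w => funext fun h => ?_
  rcases h with _ | h
  · simp only [Module.End.mul_apply, bidiagVecMul_apply, jacobiVecMul_apply_zero,
      jacobiVecMul_apply_succ, zero_add]
    have hdiag0 := hdiag 0
    rw [hlam'0, add_zero] at hdiag0
    linear_combination w 0 * hdiag0 + w 1 * hsup 0
  · simp only [Module.End.mul_apply, bidiagVecMul_apply, jacobiVecMul_apply_succ]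
    linear_combination w h * hlam h + w (h + 1) * hdiag (h + 1) + w (h + 2) * hsup (h + 1)

lemma bidiagVecMul_jacobiVecMul_pow_single_zero {b lam b' lam' c : ℕ → R}
    (hM : SemiconjBy (bidiagVecMul c) (jacobiVecMul b lam) (jacobiVecMul b' lam')) (n : ℕ) :
    bidiagVecMul c ((jacobiVecMul b lam ^ n) (Pi.single 0 1)) =
      c 0 • (jacobiVecMul b' lam' ^ n) (Pi.single 0 1) := by
  have single : bidiagVecMul c (Pi.single 0 1) = c 0 • Pi.single 0 1 := by
    ext (_ | h) <;> simp
  rw [← Module.End.mul_apply, (hM.pow_right n).eq, Module.End.mul_apply, single, map_smul]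

end Darboux

section DumontFoata

variable {R : Type*} [CommRing R]

def dumontFoataB (x y z xb yb zb : R) (i : ℕ) : R :=
  (x + (i : R)) * (yb + i) + (y + i) * (zb + i) + (z + i) * (xb + i) - i * (i + 1)

def dumontFoataLam (x y z xb yb zb : R) (i : ℕ) : R :=
  (i : R) * (xb + y + (i : R) - 1) * (yb + z + (i : R) - 1) * (zb + x + (i : R) - 1)

lemma dumontFoata_semiconjBy (x y z xb yb zb : R) :
    SemiconjBy (bidiagVecMul fun h => (x + zb + h) * (y + xb + h))
      (jacobiVecMul (dumontFoataB x y z xb yb zb) (dumontFoataLam x y z xb yb zb))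
      (jacobiVecMul (dumontFoataB (x + 1) y z (xb + 1) yb zb)
        (dumontFoataLam (x + 1) y z (xb + 1) yb zb)) :=
  bidiagVecMul_semiconjBy (by simp [dumontFoataLam])
    (fun h => by simp only [dumontFoataLam]; push_cast; ring)
    (fun h => by simp only [dumontFoataB, dumontFoataLam]; push_cast; ring)
    (fun h => by simp only [dumontFoataB]; push_cast; ring)

lemma gammaAux_eq_jacobiVecMul_pow (y z yb zb : R) (n : ℕ) : ∀ x xb : R,
    GammaAux n x y z xb yb zb =
      (jacobiVecMul (dumontFoataB x y z xb yb zb) (dumontFoataLam x y z xb yb zb) ^ n)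
        (Pi.single 0 1) 0 := by
  induction n with
  | zero => simp [GammaAux]
  | succ n ih =>
    intro x xb
    have hL := congrFun (bidiagVecMul_jacobiVecMul_pow_single_zero
      (dumontFoata_semiconjBy x y z xb yb zb) n) 0
    simp only [bidiagVecMul_apply, Nat.cast_zero, add_zero, Pi.smul_apply, smul_eq_mul] at hL
    rw [GammaAux, ih, ih, pow_succ', Module.End.mul_apply, jacobiVecMul_apply_zero]
    simp only [dumontFoataB, Nat.cast_zero, add_zero]
    linear_combination -hL

end DumontFoata

theorem gamma_eq_motzkinSum {R : Type*} [CommRing R] (x y z xb yb zb : R) (n : ℕ) :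
    Gamma (n + 1) x y z xb yb zb =
      motzkinSum
        (fun i => (x + (i : R)) * (yb + i) + (y + i) * (zb + i) + (z + i) * (xb + i)
          - i * (i + 1))
        (fun i => (i : R) * (xb + y + (i : R) - 1) * (yb + z + (i : R) - 1)
          * (zb + x + (i : R) - 1))
        n := by
  change GammaAux n x y z xb yb zb =
    motzkinSum (dumontFoataB x y z xb yb zb) (dumontFoataLam x y z xb yb zb) n
  rw [gammaAux_eq_jacobiVecMul_pow, motzkinSum_eq_jacobiMulVec_pow, jacobiVecMul_pow_single_zero]
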